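/- For every rank-biased leftist heap x: rank(x) ≤ prank(x) ≤ log₂ s(x) + 1, where prank(⟨⟩)=0 and prank(⟨t,a,u⟩)=rank(t)+1 is the minor rank, and s(x) is the number of nodes of x plus one. -/
import Mathlib


inductive BTree (α : Type) : Type
  | nil : BTree α
  | node : BTree α → α → BTree α → BTree α

namespace BTree

variable {α : Type} [LinearOrder α]

/-- number of nodes -/
def size : BTree α → ℕ
  | nil => 0
  | node t _ u => size t + size u + 1

/-- size plus one -/
def s (x : BTree α) : ℕ := size x + 1

def rank : BTree α → ℕ
  | nil => 0
  | node _ _ u => rank u + 1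

/-- minor rank -/
def prank : BTree α → ℕ
  | nil => 0
  | node t _ _ => rank t + 1

/-- `a` is less than or equal to every label of the tree -/
def LeAll (a : α) : BTree α → Prop
  | nil => True
  | node t b u => a ≤ b ∧ LeAll a t ∧ LeAll a u

/-- heap property: every node's label is ≤ all labels in its subtrees -/
def IsHeap : BTree α → Prop
  | nil => True
  | node t a u => LeAll a t ∧ LeAll a u ∧ IsHeap t ∧ IsHeap u

/-- rank-biased leftist property -/
def RankLeftist : BTree α → Prop
  | nil => True
  | node t _ u => rank u ≤ rank t ∧ RankLeftist t ∧ RankLeftist u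

/-- weight-biased leftist property -/
def WeightLeftist : BTree α → Prop
  | nil => True
  | node t _ u => size u ≤ size t ∧ WeightLeftist t ∧ WeightLeftist u

/-- rank-biased balancing -/
def balR : BTree α → BTree α
  | nil => nil
  | node t a u => if rank u < rank t then node t a u else node u a t

/-- weight-biased balancing -/
def balW : BTree α → BTree α
  | nil => nil
  | node t a u => if size u < size t then node t a u else node u a t

/-- rank-biased merge -/
def mergeR : BTree α → BTree α → BTree α
  | nil, nil => nil
  | nil, node v b w => balR (node v b (mergeR nil w))
  | node t a u, nil => balR (node t a (mergeR u nil))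
  | node t a u, node v b w =>
      if a ≤ b then balR (node t a (mergeR u (node v b w)))
      else balR (node v b (mergeR (node t a u) w))
termination_by x y => rank x + rank y
decreasing_by all_goals simp [rank]

/-- weight-biased merge -/
def mergeW : BTree α → BTree α → BTree α
  | nil, nil => nil
  | nil, node v b w => balW (node v b (mergeW nil w))
  | node t a u, nil => balW (node t a (mergeW u nil))
  | node t a u, node v b w =>
      if a ≤ b then balW (node t a (mergeW u (node v b w)))
      else balW (node v b (mergeW (node t a u) w))
termination_by x y => rank x + rank y
decreasing_by all_goals simp [rank]

/-- number of comparisons used when merging (independent of the balancing strategy) -/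
def cost : BTree α → BTree α → ℕ
  | nil, nil => 0
  | nil, node _ _ w => cost nil w + 1
  | node _ _ u, nil => cost u nil + 1
  | node t a u, node v b w =>
      (if a ≤ b then cost u (node v b w) else cost (node t a u) w) + 1
termination_by x y => rank x + rank y
decreasing_by all_goals simp [rank]

end BTree


open BTree in
theorem two_pow_rank_le_s {α : Type} (x : BTree α) (hl : RankLeftist x) :
    2 ^ rank x ≤ s x := by
  induction x with
  | nil => simp [rank, s, size]
  | node t a u iht ihu =>
    obtain ⟨h1, h2, h3⟩ := hl
    have ht := iht h2
    have hu := ihu h3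
    have : 2 ^ rank u ≤ 2 ^ rank t := Nat.pow_le_pow_right (by norm_num) h1
    simp only [rank, s, size] at *
    calc 2 ^ (rank u + 1) = 2 ^ rank u + 2 ^ rank u := by ring
    _ ≤ (size t + 1) + (size u + 1) := by omega
    _ ≤ size t + size u + 1 + 1 := by omega

/- For every rank-biased leftist heap x: rank(x) ≤ prank(x) ≤ log₂ s(x) + 1. -/
open BTree in
theorem rank_le_prank_le_log2 (α : Type) [LinearOrder α]
    (x : BTree α) (hh : IsHeap x) (hl : RankLeftist x) :
    rank x ≤ prank x ∧ (prank x : ℝ) ≤ Real.logb 2 (s x) + 1 := by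
  cases x with
  | nil => simp [rank, prank, s, size, Real.logb]
  | node t a u =>
    obtain ⟨h1, h2, h3⟩ := hl
    constructor
    · simp only [rank, prank]; omega
    · simp only [prank]
      have ht := two_pow_rank_le_s t h2
      have hs : (2:ℝ) ^ rank t ≤ (s (node t a u) : ℝ) := by
        have : (2:ℕ) ^ rank t ≤ s (node t a u) := by
          simp only [s, size] at ht ⊢; omega
        exact_mod_cast this
      have hlog : (rank t : ℝ) ≤ Real.logb 2 (s (node t a u)) := by
        have hspos : (0:ℝ) < (s (node t a u) : ℝ) := by
          simp only [s]; positivity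
        have := (Real.logb_le_logb (by norm_num : (1:ℝ) < 2) (by positivity) hspos).2 hs
        rwa [show ((2:ℝ) ^ rank t) = (2:ℝ) ^ (rank t : ℕ) from rfl,
          Real.logb_pow, Real.logb_self_eq_one, mul_one (M := ℝ)] at this
        norm_num
      push_cast
      linarith
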